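/- Let n ≥ 1, let V : ℝⁿ → ℝ be smooth, let Φ be a global Hamiltonian flow for V, let t₀, (y₀,η₀), z₀, T × Y × Z and η̂ be as in the central field setting, and let λ ∈ ℝ with action S as in the action setting. Assume moreover that λ is a regular value of p, i.e. for every (x,ξ) with p(x,ξ) = λ one has (∇V(x), ξ) ≠ (0,0). Then, possibly after shrinking T × Y × Z around (t₀,y₀,z₀), S is a non-degenerate phase function with phase variable t: at every (t,y,z) ∈ T × Y × Z with ∂S/∂t(t,y,z) = 0, the full gradient of the function (t,y,z) ↦ ∂S/∂t(t,y,z) is nonzero. -/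

import Mathlib

open scoped RealInnerProductSpace
open Filter

noncomputable section

/-- Euclidean configuration space `ℝⁿ`. -/
abbrev Euc (n : ℕ) := EuclideanSpace ℝ (Fin n)

/-- The Hamiltonian `p(x, ξ) = ½‖ξ‖² + V(x)` on phase space `ℝⁿ × ℝⁿ`. -/
def Ham (n : ℕ) (V : Euc n → ℝ) (z : Euc n × Euc n) : ℝ :=
  (1 / 2) * ‖z.2‖ ^ 2 + V z.1

/-- The Hamiltonian vector field `X_p(x, ξ) = (ξ, −∇V(x))`. -/
def HamVF (n : ℕ) (V : Euc n → ℝ) (z : Euc n × Euc n) : Euc n × Euc n :=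
  (z.2, -gradient V z.1)

/-- `Φ` is a global Hamiltonian flow for the potential `V`: a smooth map
`ℝ × (ℝⁿ × ℝⁿ) → ℝⁿ × ℝⁿ` with `Φ 0 z = z`, `∂ₜΦ(t,z) = X_p(Φ(t,z))` and the
group law `Φ(s+t, z) = Φ(s, Φ(t, z))`. -/
def IsGlobalHamFlow (n : ℕ) (V : Euc n → ℝ)
    (Φ : ℝ → Euc n × Euc n → Euc n × Euc n) : Prop :=
  ContDiff ℝ (⊤ : ℕ∞) (fun q : ℝ × (Euc n × Euc n) => Φ q.1 q.2) ∧
  (∀ z, Φ 0 z = z) ∧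
  (∀ t z, HasDerivAt (fun s => Φ s z) (HamVF n V (Φ t z)) t) ∧
  (∀ s t z, Φ (s + t) z = Φ s (Φ t z))

set_option maxHeartbeats 1000000

namespace ActionAux

lemma gradient_inner_eq {n : ℕ} {f : Euc n → ℝ} {x v : Euc n} :
    ⟪gradient f x, v⟫ = fderiv ℝ f x v := by
  rw [← InnerProductSpace.toDual_apply_apply]
  simp [gradient]

variable {n : ℕ} {V : Euc n → ℝ} {Φ : ℝ → Euc n × Euc n → Euc n × Euc n}

lemma flow_hasFDerivAt (hΦ : IsGlobalHamFlow n V Φ) (p : ℝ × (Euc n × Euc n)) :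
    HasFDerivAt (fun q : ℝ × (Euc n × Euc n) => Φ q.1 q.2)
      (fderiv ℝ (fun q : ℝ × (Euc n × Euc n) => Φ q.1 q.2) p) p :=
  (hΦ.1.differentiable (by simp) p).hasFDerivAt

lemma flow_fderiv_time (hΦ : IsGlobalHamFlow n V Φ) (p : ℝ × (Euc n × Euc n)) :
    fderiv ℝ (fun q : ℝ × (Euc n × Euc n) => Φ q.1 q.2) p (1, 0) = HamVF n V (Φ p.1 p.2) := by
  have h1 : HasDerivAt (fun s => Φ s p.2) (HamVF n V (Φ p.1 p.2)) p.1 := hΦ.2.2.1 p.1 p.2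
  have hmk : HasDerivAt (fun s : ℝ => (s, p.2)) ((1 : ℝ), (0 : Euc n × Euc n)) p.1 :=
    (hasDerivAt_id p.1).prodMk (hasDerivAt_const _ _)
  have h2 := (flow_hasFDerivAt hΦ p).comp_hasDerivAt p.1 hmk
  exact (h2.unique h1).symm ▸ rfl

lemma flow_fderiv_init (hΦ : IsGlobalHamFlow n V Φ) (z w : Euc n × Euc n) :
    fderiv ℝ (fun q : ℝ × (Euc n × Euc n) => Φ q.1 q.2) (0, z) (0, w) = w := by
  have hmk : HasFDerivAt (fun z' : Euc n × Euc n => ((0 : ℝ), z'))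
      ((ContinuousLinearMap.inr ℝ ℝ (Euc n × Euc n))) z :=
    (hasFDerivAt_const (0:ℝ) z).prodMk (hasFDerivAt_id z)
  have h2 := (flow_hasFDerivAt hΦ (0, z)).comp z hmk
  have h1 : HasFDerivAt (fun z' : Euc n × Euc n => Φ 0 z')
      (ContinuousLinearMap.id ℝ (Euc n × Euc n)) z := by
    have : (fun z' : Euc n × Euc n => Φ 0 z') = id := funext fun z' => hΦ.2.1 z'
    rw [this]
    exact hasFDerivAt_id z
  have := h2.unique h1
  have happ := congrArg (fun L : (Euc n × Euc n) →L[ℝ] (Euc n × Euc n) => L w) this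
  simpa using happ

lemma flow_variational_fst (hΦ : IsGlobalHamFlow n V Φ) (w₀ : Euc n × Euc n)
    (v₀ : Euc n × Euc n) (s : ℝ) :
    HasDerivAt
      (fun s' : ℝ =>
        (fderiv ℝ (fun q : ℝ × (Euc n × Euc n) => Φ q.1 q.2) (s', w₀) ((0 : ℝ), v₀)).1)
      ((fderiv ℝ (fun q : ℝ × (Euc n × Euc n) => Φ q.1 q.2) (s, w₀) ((0 : ℝ), v₀)).2) s := by
  set Φu : ℝ × (Euc n × Euc n) → Euc n × Euc n := fun q => Φ q.1 q.2 with hΦu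
  set q₀ : ℝ × (Euc n × Euc n) := (s, w₀) with hq₀
  have hsm : ContDiff ℝ (⊤ : ℕ∞) Φu := hΦ.1
  -- the derivative function is smooth
  have hf' : ContDiff ℝ (⊤ : ℕ∞) (fderiv ℝ Φu) := hsm.fderiv_right (by simp)
  have hf'' : HasFDerivAt (fderiv ℝ Φu) (fderiv ℝ (fderiv ℝ Φu) q₀) q₀ :=
    (hf'.differentiable (by simp) q₀).hasFDerivAt
  -- symmetry of the second derivative
  have hsymm := second_derivative_symmetric (fun p => (flow_hasFDerivAt hΦ p)) hf''
      ((1 : ℝ), (0 : Euc n × Euc n)) ((0 : ℝ), v₀)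
  -- A : p ↦ fderiv Φu p (0, v₀) has derivative in the s-direction f''(1,0)(0,v₀)
  have hA : HasFDerivAt (fun p => fderiv ℝ Φu p ((0 : ℝ), v₀))
      ((fderiv ℝ (fderiv ℝ Φu) q₀).flip ((0 : ℝ), v₀)) q₀ := by
    have := hf''.clm_apply (hasFDerivAt_const ((0 : ℝ), v₀) q₀)
    simpa using this
  have hmk : HasDerivAt (fun s' : ℝ => (s', w₀)) ((1 : ℝ), (0 : Euc n × Euc n)) s :=
    (hasDerivAt_id s).prodMk (hasDerivAt_const _ _)
  have hAd : HasDerivAt (fun s' : ℝ => fderiv ℝ Φu (s', w₀) ((0 : ℝ), v₀))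
      (fderiv ℝ (fderiv ℝ Φu) q₀ ((1 : ℝ), (0 : Euc n × Euc n)) ((0 : ℝ), v₀)) s := by
    have := hA.comp_hasDerivAt s hmk
    exact this
  -- B : p ↦ fderiv Φu p (1, 0) equals HamVF ∘ Φu; first components give the claim
  have hB : HasFDerivAt (fun p => fderiv ℝ Φu p ((1 : ℝ), (0 : Euc n × Euc n)))
      ((fderiv ℝ (fderiv ℝ Φu) q₀).flip ((1 : ℝ), (0 : Euc n × Euc n))) q₀ := by
    have := hf''.clm_apply (hasFDerivAt_const ((1 : ℝ), (0 : Euc n × Euc n)) q₀)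
    simpa using this
  have hB1 : HasFDerivAt (fun p => (fderiv ℝ Φu p ((1 : ℝ), (0 : Euc n × Euc n))).1)
      ((ContinuousLinearMap.fst ℝ (Euc n) (Euc n)).comp
        ((fderiv ℝ (fderiv ℝ Φu) q₀).flip ((1 : ℝ), (0 : Euc n × Euc n)))) q₀ :=
    (ContinuousLinearMap.fst ℝ (Euc n) (Euc n)).hasFDerivAt.comp q₀ hB
  have heq : (fun p => (fderiv ℝ Φu p ((1 : ℝ), (0 : Euc n × Euc n))).1)
      = fun p => (Φu p).2 := by
    funext p
    rw [show fderiv ℝ Φu p ((1:ℝ), (0 : Euc n × Euc n)) = HamVF n V (Φ p.1 p.2) from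
      flow_fderiv_time hΦ p]
    rfl
  have hB2 : HasFDerivAt (fun p => (Φu p).2)
      ((ContinuousLinearMap.snd ℝ (Euc n) (Euc n)).comp (fderiv ℝ Φu q₀)) q₀ :=
    (ContinuousLinearMap.snd ℝ (Euc n) (Euc n)).hasFDerivAt.comp q₀ (flow_hasFDerivAt hΦ q₀)
  have hkey : (fderiv ℝ (fderiv ℝ Φu) q₀ ((0 : ℝ), v₀) ((1 : ℝ), (0 : Euc n × Euc n))).1
      = (fderiv ℝ Φu q₀ ((0 : ℝ), v₀)).2 := by
    have := (heq ▸ hB1).unique hB2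
    have happ := congrArg (fun L : (ℝ × (Euc n × Euc n)) →L[ℝ] Euc n => L ((0 : ℝ), v₀)) this
    simpa using happ
  have : HasDerivAt (fun s' : ℝ => (fderiv ℝ Φu (s', w₀) ((0 : ℝ), v₀)).1)
      ((fderiv ℝ (fderiv ℝ Φu) q₀ ((1 : ℝ), (0 : Euc n × Euc n)) ((0 : ℝ), v₀)).1) s :=
    (ContinuousLinearMap.fst ℝ (Euc n) (Euc n)).hasFDerivAt.comp_hasDerivAt s hAd
  rw [hsymm, hkey] at this
  exact this

lemma ham_deriv_along (hΦ : IsGlobalHamFlow n V Φ) (hV : ContDiff ℝ (⊤ : ℕ∞) V)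
    (z : Euc n × Euc n) (t : ℝ) :
    HasDerivAt (fun s => Ham n V (Φ s z)) 0 t := by
  have hflow := hΦ.2.2.1 t z
  have hx : HasDerivAt (fun s => (Φ s z).1) ((HamVF n V (Φ t z)).1) t :=
    (ContinuousLinearMap.fst ℝ (Euc n) (Euc n)).hasFDerivAt.comp_hasDerivAt t hflow
  have hξ : HasDerivAt (fun s => (Φ s z).2) ((HamVF n V (Φ t z)).2) t :=
    (ContinuousLinearMap.snd ℝ (Euc n) (Euc n)).hasFDerivAt.comp_hasDerivAt t hflow
  have hinner := ((hξ.inner ℝ hξ).const_mul ((1:ℝ)/2))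
  simp only [real_inner_self_eq_norm_sq] at hinner
  have hVd : HasDerivAt (fun s => V ((Φ s z).1))
      (fderiv ℝ V ((Φ t z).1) ((HamVF n V (Φ t z)).1)) t :=
    (hV.differentiable (by simp) _).hasFDerivAt.comp_hasDerivAt t hx
  have hsum : HasDerivAt (fun s => (1:ℝ)/2 * ‖(Φ s z).2‖ ^ 2 + V ((Φ s z).1)) _ t := hinner.add hVd
  have : (fun s => (1:ℝ)/2 * ‖(Φ s z).2‖ ^ 2 + V ((Φ s z).1))
      = fun s => Ham n V (Φ s z) := by
    funext s; rfl
  rw [this] at hsum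
  refine HasDerivAt.congr_deriv hsum (Eq.symm ?_)
  rw [← gradient_inner_eq]
  show (0:ℝ) = 1/2 * (⟪(Φ t z).2, -gradient V (Φ t z).1⟫ + ⟪-gradient V (Φ t z).1, (Φ t z).2⟫)
      + ⟪gradient V (Φ t z).1, (Φ t z).2⟫
  rw [real_inner_comm ((Φ t z).2)]
  rw [inner_neg_right, real_inner_comm (gradient V (Φ t z).1)]
  ring

lemma energy_conserved (hΦ : IsGlobalHamFlow n V Φ) (hV : ContDiff ℝ (⊤ : ℕ∞) V)
    (z : Euc n × Euc n) (t : ℝ) :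
    Ham n V (Φ t z) = Ham n V z := by
  have hconst : (fun s => Ham n V (Φ s z)) t = (fun s => Ham n V (Φ s z)) 0 :=
    is_const_of_deriv_eq_zero
      (fun s => (ham_deriv_along hΦ hV z s).differentiableAt)
      (fun s => (ham_deriv_along hΦ hV z s).deriv) t 0
  simpa [hΦ.2.1 z] using hconst

lemma hj_deriv (hΦ : IsGlobalHamFlow n V Φ) (hV : ContDiff ℝ (⊤ : ℕ∞) V)
    {U : Set ℝ} (hU : IsOpen U) {y z : Euc n} {η : ℝ → Euc n}
    (hη : ContDiffOn ℝ (⊤ : ℕ∞) η U)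
    (hend : ∀ a ∈ U, (Φ a (y, η a)).1 = z)
    (lam : ℝ) {t : ℝ} (ht : t ∈ U) :
    HasDerivAt (fun t' => ∫ s in (0:ℝ)..t',
        ((1 / 2) * ‖(Φ s (y, η t')).2‖ ^ 2 - V (Φ s (y, η t')).1 + lam))
      (lam - ((1 / 2) * ‖η t‖ ^ 2 + V y)) t := by
  classical
  set Φu : ℝ × (Euc n × Euc n) → Euc n × Euc n := fun q => Φ q.1 q.2 with hΦudef
  have hΦusm : ContDiff ℝ (⊤ : ℕ∞) Φu := hΦ.1
  set v : ℝ → Euc n := deriv η with hvdef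
  have hηat : ∀ a ∈ U, ContDiffAt ℝ (⊤ : ℕ∞) η a := fun a ha => hη.contDiffAt (hU.mem_nhds ha)
  have hηd : ∀ a ∈ U, HasDerivAt η (v a) a := fun a ha =>
    (((hηat a ha).differentiableAt (by simp))).hasDerivAt
  have hvcont : ContinuousOn v U := hη.continuousOn_deriv_of_isOpen hU (by simp)
  set F : ℝ → ℝ → ℝ := fun a s =>
    (1 / 2) * ‖(Φ s (y, η a)).2‖ ^ 2 - V (Φ s (y, η a)).1 + lam with hFdef
  set F' : ℝ → ℝ → ℝ := fun a s =>
    ⟪(Φ s (y, η a)).2, (fderiv ℝ Φu (s, (y, η a)) ((0:ℝ), ((0 : Euc n), v a))).2⟫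
      - ⟪gradient V (Φ s (y, η a)).1,
          (fderiv ℝ Φu (s, (y, η a)) ((0:ℝ), ((0 : Euc n), v a))).1⟫ with hF'def
  -- continuity of F in s for each fixed a
  have hFa_cont : ∀ a, Continuous (F a) := by
    intro a
    have h1 : Continuous fun s : ℝ => Φ s (y, η a) := by
      have := hΦusm.continuous
      exact this.comp (continuous_id.prodMk continuous_const)
    have h2 : Continuous fun s : ℝ => (Φ s (y, η a)).2 := continuous_snd.comp h1
    have h3 : Continuous fun s : ℝ => (Φ s (y, η a)).1 := continuous_fst.comp h1
    exact (((continuous_const.mul (h2.norm.pow 2)).sub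
      ((hV.continuous).comp h3)).add continuous_const)
  -- joint continuity of F on U ×ˢ univ
  have hin : ContinuousOn (fun p : ℝ × ℝ => ((p.2, (y, η p.1)) : ℝ × (Euc n × Euc n)))
      (U ×ˢ (Set.univ : Set ℝ)) :=
    ContinuousOn.prodMk continuous_snd.continuousOn
      (ContinuousOn.prodMk continuousOn_const
        (hη.continuousOn.comp continuous_fst.continuousOn (fun p hp => hp.1)))
  have hGcont : ContinuousOn (fun p : ℝ × ℝ => Φ p.2 (y, η p.1)) (U ×ˢ (Set.univ : Set ℝ)) :=
    hΦusm.continuous.comp_continuousOn hin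
  have hFcont : ContinuousOn (fun p : ℝ × ℝ => F p.1 p.2) (U ×ˢ (Set.univ : Set ℝ)) := by
    have h2 := continuous_snd.comp_continuousOn hGcont
    have h3 := continuous_fst.comp_continuousOn hGcont
    exact ((continuousOn_const.mul (h2.norm.pow 2)).sub
      (hV.continuous.comp_continuousOn h3)).add continuousOn_const
  -- joint continuity of F' on U ×ˢ univ
  have hF'cont : ContinuousOn (fun p : ℝ × ℝ => F' p.1 p.2) (U ×ˢ (Set.univ : Set ℝ)) := by
    have hgrad : Continuous fun x : Euc n => gradient V x := by
      have h1 : Continuous fun x : Euc n => fderiv ℝ V x := hV.continuous_fderiv (by simp)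
      exact (InnerProductSpace.toDual ℝ (Euc n)).symm.continuous.comp h1
    have hD : ContinuousOn
        (fun p : ℝ × ℝ => fderiv ℝ Φu (p.2, (y, η p.1)) ((0:ℝ), ((0 : Euc n), v p.1)))
        (U ×ˢ (Set.univ : Set ℝ)) := by
      apply ContinuousOn.clm_apply
      · exact (hΦusm.continuous_fderiv (by simp)).comp_continuousOn hin
      · exact ContinuousOn.prodMk continuousOn_const
          (ContinuousOn.prodMk continuousOn_const
            (hvcont.comp continuous_fst.continuousOn (fun p hp => hp.1)))
    have hD1 := continuous_fst.comp_continuousOn hD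
    have hD2 := continuous_snd.comp_continuousOn hD
    have hq2 := continuous_snd.comp_continuousOn hGcont
    have hq1 := continuous_fst.comp_continuousOn hGcont
    exact (hq2.inner hD2).sub ((hgrad.comp_continuousOn hq1).inner hD1)
  -- pointwise derivative of F in the parameter
  have hFd : ∀ s : ℝ, ∀ a ∈ U, HasDerivAt (fun a' => F a' s) (F' a s) a := by
    intro s a ha
    have hc : HasDerivAt (fun a' => ((s, (y, η a')) : ℝ × (Euc n × Euc n)))
        ((0:ℝ), ((0 : Euc n), v a)) a :=
      (hasDerivAt_const _ _).prodMk ((hasDerivAt_const _ _).prodMk (hηd a ha))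
    have hq : HasDerivAt (fun a' => Φu (s, (y, η a')))
        (fderiv ℝ Φu (s, (y, η a)) ((0:ℝ), ((0 : Euc n), v a))) a := by
      have := (flow_hasFDerivAt hΦ (s, (y, η a))).comp_hasDerivAt a hc; exact this
    have hx : HasDerivAt (fun a' => (Φ s (y, η a')).1)
        ((fderiv ℝ Φu (s, (y, η a)) ((0:ℝ), ((0 : Euc n), v a))).1) a :=
      (ContinuousLinearMap.fst ℝ (Euc n) (Euc n)).hasFDerivAt.comp_hasDerivAt a hq
    have hξ : HasDerivAt (fun a' => (Φ s (y, η a')).2)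
        ((fderiv ℝ Φu (s, (y, η a)) ((0:ℝ), ((0 : Euc n), v a))).2) a :=
      (ContinuousLinearMap.snd ℝ (Euc n) (Euc n)).hasFDerivAt.comp_hasDerivAt a hq
    have hn := (hξ.inner ℝ hξ).const_mul ((1:ℝ)/2)
    simp only [real_inner_self_eq_norm_sq] at hn
    have hVc : HasDerivAt (fun a' => V (Φ s (y, η a')).1)
        (fderiv ℝ V ((Φ s (y, η a)).1)
          ((fderiv ℝ Φu (s, (y, η a)) ((0:ℝ), ((0 : Euc n), v a))).1)) a :=
      (hV.differentiable (by simp) _).hasFDerivAt.comp_hasDerivAt a hx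
    have := (hn.sub hVc).add_const lam
    refine HasDerivAt.congr_deriv this (Eq.symm ?_)
    rw [← gradient_inner_eq,
      real_inner_comm ((Φ s (y, η a)).2)
        ((fderiv ℝ Φu (s, (y, η a)) ((0:ℝ), ((0 : Euc n), v a))).2)]
    ring
  -- choose ε with closedBall t ε ⊆ U
  obtain ⟨ε₀, hε₀pos, hball⟩ := Metric.isOpen_iff.mp hU t ht
  set ε : ℝ := ε₀ / 2 with hεdef
  have hεpos : 0 < ε := by positivity
  have hcb : Metric.closedBall t ε ⊆ U := by
    refine subset_trans ?_ hball
    intro u hu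
    have : dist u t ≤ ε := hu
    have : dist u t < ε₀ := lt_of_le_of_lt this (by simp [hεdef]; linarith)
    exact this
  -- uniform bound for F' on closedBall t ε × uIcc 0 t
  have hK : IsCompact ((Metric.closedBall t ε) ×ˢ (Set.uIcc (0:ℝ) t)) :=
    (isCompact_closedBall t ε).prod isCompact_uIcc
  obtain ⟨C, hC⟩ := hK.exists_bound_of_continuousOn
    (hF'cont.mono (by intro p hp; exact ⟨hcb hp.1, trivial⟩))
  -- continuity of F' t in s
  have hF'tc : Continuous (F' t) := by
    have h1 : Continuous fun s : ℝ => Φ s (y, η t) :=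
      hΦusm.continuous.comp (continuous_id.prodMk continuous_const)
    have hD : Continuous fun s : ℝ =>
        fderiv ℝ Φu (s, (y, η t)) ((0:ℝ), ((0 : Euc n), v t)) :=
      ((hΦusm.continuous_fderiv (by simp)).comp
        (continuous_id.prodMk continuous_const)).clm_apply continuous_const
    have hgrad : Continuous fun x : Euc n => gradient V x :=
      (InnerProductSpace.toDual ℝ (Euc n)).symm.continuous.comp
        (hV.continuous_fderiv (by simp))
    exact ((continuous_snd.comp h1).inner (continuous_snd.comp hD)).sub
      ((hgrad.comp (continuous_fst.comp h1)).inner (continuous_fst.comp hD))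
  -- differentiation under the integral sign
  have hDer1 : HasDerivAt (fun a : ℝ => ∫ s in (0:ℝ)..t, F a s)
      (∫ s in (0:ℝ)..t, F' t s) t := by
    have h_bound : ∀ᵐ s ∂MeasureTheory.volume, s ∈ Set.uIoc (0:ℝ) t →
        ∀ a ∈ Metric.ball t ε, ‖F' a s‖ ≤ C := by
      refine Filter.Eventually.of_forall ?_
      intro s hs a hac
      exact hC (a, s) ⟨Metric.ball_subset_closedBall hac, Set.uIoc_subset_uIcc hs⟩
    have h_diff : ∀ᵐ s ∂MeasureTheory.volume, s ∈ Set.uIoc (0:ℝ) t →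
        ∀ a ∈ Metric.ball t ε, HasDerivAt (fun a' => F a' s) (F' a s) a := by
      refine Filter.Eventually.of_forall ?_
      intro s hs a hac
      exact hFd s a (hcb (Metric.ball_subset_closedBall hac))
    have hF_meas : ∀ᶠ a in nhds t,
        MeasureTheory.AEStronglyMeasurable (F a)
          (MeasureTheory.volume.restrict (Set.uIoc (0:ℝ) t)) :=
      Filter.Eventually.of_forall fun a => (hFa_cont a).aestronglyMeasurable
    have h := intervalIntegral.hasDerivAt_integral_of_dominated_loc_of_deriv_le
      (Metric.ball_mem_nhds t hεpos) hF_meas ((hFa_cont t).intervalIntegrable 0 t)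
      hF'tc.aestronglyMeasurable h_bound intervalIntegrable_const h_diff
    exact h.2
  -- derivative of the moving-endpoint integral
  have hDer2 : HasDerivAt (fun t' : ℝ => ∫ s in t..t', F t' s) (F t t) t := by
    rw [hasDerivAt_iff_isLittleO, Asymptotics.isLittleO_iff]
    intro c hc
    have hFat : ContinuousAt (fun p : ℝ × ℝ => F p.1 p.2) (t, t) :=
      hFcont.continuousAt ((hU.prod isOpen_univ).mem_nhds ⟨ht, trivial⟩)
    obtain ⟨δ, hδpos, hδ⟩ := Metric.continuousAt_iff.mp hFat c hc
    filter_upwards [Metric.ball_mem_nhds t hδpos] with t' ht'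
    have hballmem : dist t' t < δ := ht'
    have h0 : (∫ s in t..t, F t s) = 0 := intervalIntegral.integral_same
    have hsub : (∫ s in t..t', F t' s) - (t' - t) • F t t
        = ∫ s in t..t', (F t' s - F t t) := by
      rw [intervalIntegral.integral_sub ((hFa_cont t').intervalIntegrable t t')
        intervalIntegrable_const, intervalIntegral.integral_const]
    have hbnd : ∀ s ∈ Set.uIoc t t', ‖F t' s - F t t‖ ≤ c := by
      intro s hs
      have hs' : s ∈ Set.uIcc t t' := Set.uIoc_subset_uIcc hs
      have hds : dist s t ≤ dist t t' :=
        Real.dist_le_of_mem_uIcc hs' Set.left_mem_uIcc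
      have hlt : dist ((t', s) : ℝ × ℝ) (t, t) < δ := by
        rw [Prod.dist_eq]
        exact max_lt hballmem (lt_of_le_of_lt (by rwa [dist_comm t t'] at hds) hballmem)
      have hcl := hδ hlt
      rw [Real.dist_eq] at hcl
      rw [Real.norm_eq_abs]
      exact le_of_lt hcl
    calc ‖(∫ s in t..t', F t' s) - (∫ s in t..t, F t s) - (t' - t) • F t t‖
        = ‖∫ s in t..t', (F t' s - F t t)‖ := by rw [h0, sub_zero, hsub]
      _ ≤ c * |t' - t| := intervalIntegral.norm_integral_le_of_norm_le_const hbnd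
      _ = c * ‖t' - t‖ := by rw [Real.norm_eq_abs]
  -- integration by parts: compute ∫ F' t
  set m : ℝ → ℝ := fun s =>
    ⟪(Φ s (y, η t)).2, (fderiv ℝ Φu (s, (y, η t)) ((0:ℝ), ((0 : Euc n), v t))).1⟫ with hmdef
  have hmd : ∀ s : ℝ, HasDerivAt m (F' t s) s := by
    intro s
    have hflow := hΦ.2.2.1 s (y, η t)
    have hξ' : HasDerivAt (fun s' => (Φ s' (y, η t)).2) ((HamVF n V (Φ s (y, η t))).2) s :=
      (ContinuousLinearMap.snd ℝ (Euc n) (Euc n)).hasFDerivAt.comp_hasDerivAt s hflow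
    have hw := flow_variational_fst hΦ (y, η t) ((0 : Euc n), v t) s
    have hm' := hξ'.inner ℝ hw
    refine HasDerivAt.congr_deriv hm' (Eq.symm ?_)
    show F' t s = _
    simp only [HamVF, inner_neg_left]
    ring
  have hint_eq : (∫ s in (0:ℝ)..t, F' t s) = m t - m 0 :=
    intervalIntegral.integral_eq_sub_of_hasDerivAt (fun s _ => hmd s)
      (hF'tc.intervalIntegrable 0 t)
  have hm0 : m 0 = 0 := by
    have hinit := flow_fderiv_init hΦ (y, η t) ((0 : Euc n), v t)
    show ⟪(Φ 0 (y, η t)).2,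
      (fderiv ℝ Φu ((0:ℝ), (y, η t)) ((0:ℝ), ((0 : Euc n), v t))).1⟫ = 0
    rw [hinit]
    exact inner_zero_right _
  have hmt : m t = - ‖(Φ t (y, η t)).2‖ ^ 2 := by
    have hc : HasDerivAt (fun a => ((a, (y, η a)) : ℝ × (Euc n × Euc n)))
        ((1:ℝ), ((0 : Euc n), v t)) t :=
      (hasDerivAt_id t).prodMk ((hasDerivAt_const _ _).prodMk (hηd t ht))
    have hq := (flow_hasFDerivAt hΦ (t, (y, η t))).comp_hasDerivAt t hc
    have hx1 : HasDerivAt (fun a => (Φ a (y, η a)).1)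
        ((fderiv ℝ Φu (t, (y, η t)) ((1:ℝ), ((0 : Euc n), v t))).1) t :=
      (ContinuousLinearMap.fst ℝ (Euc n) (Euc n)).hasFDerivAt.comp_hasDerivAt t hq
    have hconst : HasDerivAt (fun a => (Φ a (y, η a)).1) (0 : Euc n) t := by
      have hev : (fun a => (Φ a (y, η a)).1) =ᶠ[nhds t] (fun _ => z) :=
        Filter.eventually_of_mem (hU.mem_nhds ht) hend
      exact (hasDerivAt_const t z).congr_of_eventuallyEq hev
    have hzero := hx1.unique hconst
    have hvec : ((1:ℝ), ((0 : Euc n), v t))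
        = ((1:ℝ), (0 : Euc n × Euc n)) + ((0:ℝ), ((0 : Euc n), v t)) := by
      simp [Prod.ext_iff]
    rw [hvec, map_add, flow_fderiv_time hΦ ((t, (y, η t)) : ℝ × (Euc n × Euc n))] at hzero
    have hw_t : (fderiv ℝ Φu (t, (y, η t)) ((0:ℝ), ((0 : Euc n), v t))).1
        = - (Φ t (y, η t)).2 := by
      have : (HamVF n V (Φ t (y, η t))).1
          + (fderiv ℝ Φu (t, (y, η t)) ((0:ℝ), ((0 : Euc n), v t))).1 = 0 := by
        rw [← Prod.fst_add, hzero]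
      simp only [HamVF] at this
      linear_combination (norm := module) this
    show ⟪(Φ t (y, η t)).2,
      (fderiv ℝ Φu (t, (y, η t)) ((0:ℝ), ((0 : Euc n), v t))).1⟫ = _
    rw [hw_t, inner_neg_right, real_inner_self_eq_norm_sq]
  -- assemble
  have hfinal := hDer1.add hDer2
  have hval : (∫ s in (0:ℝ)..t, F' t s) + F t t
      = lam - ((1 / 2) * ‖η t‖ ^ 2 + V y) := by
    rw [hint_eq, hm0, hmt]
    have hcons := energy_conserved hΦ hV (y, η t) t
    simp only [Ham] at hcons
    show -‖(Φ t (y, η t)).2‖ ^ 2 - 0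
        + ((1 / 2) * ‖(Φ t (y, η t)).2‖ ^ 2 - V (Φ t (y, η t)).1 + lam) = _
    linarith [hcons]
  rw [hval] at hfinal
  refine hfinal.congr_of_eventuallyEq (Filter.Eventually.of_forall fun a => ?_)
  show (∫ s in (0:ℝ)..a, F a s)
      = (∫ s in (0:ℝ)..t, F a s) + ∫ s in t..a, F a s
  rw [intervalIntegral.integral_add_adjacent_intervals
    ((hFa_cont a).intervalIntegrable 0 t) ((hFa_cont a).intervalIntegrable t a)]

end ActionAux

/-- **The action is a non-degenerate phase function.**  In the central field and
action setting, if `λ` is a regular value of `p` (i.e. `(∇V(x), ξ) ≠ (0,0)` whenever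
`p(x,ξ) = λ`), then, possibly after shrinking `T × Y × Z` around `(t₀, y₀, z₀)`, at
every point where `∂S/∂t = 0` the full gradient of `(t,y,z) ↦ ∂S/∂t(t,y,z)` is
nonzero. -/
theorem action_nondegenerate_phase
    (n : ℕ) (hn : 1 ≤ n)
    (V : Euc n → ℝ) (hV : ContDiff ℝ (⊤ : ℕ∞) V)
    (Φ : ℝ → Euc n × Euc n → Euc n × Euc n) (hΦ : IsGlobalHamFlow n V Φ)
    (t₀ : ℝ) (y₀ η₀ z₀ : Euc n) (hz₀ : z₀ = (Φ t₀ (y₀, η₀)).1)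
    (hcf : IsUnit (fderiv ℝ (fun η => (Φ t₀ (y₀, η)).1) η₀))
    (T : Set ℝ) (Y Z : Set (Euc n))
    (hT : IsOpen T) (hY : IsOpen Y) (hZ : IsOpen Z)
    (hconn : IsConnected (T ×ˢ Y ×ˢ Z))
    (ht₀ : t₀ ∈ T) (hy₀ : y₀ ∈ Y) (hz₀mem : z₀ ∈ Z)
    (ηh : ℝ → Euc n → Euc n → Euc n)
    (hηsmooth : ContDiffOn ℝ (⊤ : ℕ∞) (fun q : ℝ × Euc n × Euc n => ηh q.1 q.2.1 q.2.2)
      (T ×ˢ Y ×ˢ Z))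
    (hη₀ : ηh t₀ y₀ z₀ = η₀)
    (hsolve : ∀ t ∈ T, ∀ y ∈ Y, ∀ z ∈ Z, (Φ t (y, ηh t y z)).1 = z)
    (lam : ℝ) (S : ℝ → Euc n → Euc n → ℝ)
    (hS : ∀ t y z, S t y z = ∫ s in (0:ℝ)..t,
      ((1 / 2) * ‖(Φ s (y, ηh t y z)).2‖ ^ 2 - V (Φ s (y, ηh t y z)).1 + lam))
    (hreg : ∀ x ξ : Euc n, Ham n V (x, ξ) = lam → ¬(gradient V x = 0 ∧ ξ = 0)) :
    ∃ (T' : Set ℝ) (Y' Z' : Set (Euc n)),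
      IsOpen T' ∧ IsOpen Y' ∧ IsOpen Z' ∧
      T' ⊆ T ∧ Y' ⊆ Y ∧ Z' ⊆ Z ∧
      t₀ ∈ T' ∧ y₀ ∈ Y' ∧ z₀ ∈ Z' ∧
      ∀ t ∈ T', ∀ y ∈ Y', ∀ z ∈ Z',
        deriv (fun t' => S t' y z) t = 0 →
        fderiv ℝ (fun q : ℝ × Euc n × Euc n =>
          deriv (fun t' => S t' q.2.1 q.2.2) q.1) (t, y, z) ≠ 0 := by
  classical
  refine ⟨T, Y, Z, hT, hY, hZ, subset_rfl, subset_rfl, subset_rfl, ht₀, hy₀, hz₀mem, ?_⟩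
  intro t ht y hy z hz hderiv0 hcontra
  set N : ℝ × Euc n × Euc n → Euc n := fun q => ηh q.1 q.2.1 q.2.2 with hNdef
  have hopen : IsOpen (T ×ˢ Y ×ˢ Z) := hT.prod (hY.prod hZ)
  have hmemq : ((t, y, z) : ℝ × Euc n × Euc n) ∈ T ×ˢ Y ×ˢ Z := ⟨ht, hy, hz⟩
  -- the Hamilton–Jacobi identity on the whole open set
  have hder : ∀ p : ℝ × Euc n × Euc n, p ∈ T ×ˢ Y ×ˢ Z →
      deriv (fun t' => S t' p.2.1 p.2.2) p.1
        = lam - ((1 / 2) * ‖ηh p.1 p.2.1 p.2.2‖ ^ 2 + V p.2.1) := by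
    rintro ⟨t₁, y₁, z₁⟩ ⟨ht₁, hy₁, hz₁⟩
    have hηp : ContDiffOn ℝ (⊤ : ℕ∞) (fun a => ηh a y₁ z₁) T := by
      have hmk : ContDiffOn ℝ (⊤ : ℕ∞) (fun a : ℝ => ((a, y₁, z₁) : ℝ × Euc n × Euc n)) T :=
        (contDiff_id.prodMk (contDiff_const.prodMk contDiff_const)).contDiffOn
      exact hηsmooth.comp hmk (fun a ha => ⟨ha, hy₁, hz₁⟩)
    have hend : ∀ a ∈ T, (Φ a (y₁, ηh a y₁ z₁)).1 = z₁ :=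
      fun a ha => hsolve a ha y₁ hy₁ z₁ hz₁
    have hj := ActionAux.hj_deriv hΦ hV hT hηp hend lam ht₁
    have hfun : (fun t' => ∫ s in (0:ℝ)..t',
        ((1 / 2) * ‖(Φ s (y₁, ηh t' y₁ z₁)).2‖ ^ 2 - V (Φ s (y₁, ηh t' y₁ z₁)).1 + lam))
        = fun t' => S t' y₁ z₁ := funext fun t' => (hS t' y₁ z₁).symm
    rw [hfun] at hj
    exact hj.deriv
  -- replace by the explicit function near (t, y, z)
  have hEq : (fun q : ℝ × Euc n × Euc n => deriv (fun t' => S t' q.2.1 q.2.2) q.1)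
      =ᶠ[nhds ((t, y, z) : ℝ × Euc n × Euc n)]
      (fun q : ℝ × Euc n × Euc n => lam - ((1 / 2) * ‖N q‖ ^ 2 + V q.2.1)) :=
    Filter.eventually_of_mem (hopen.mem_nhds hmemq) (fun p hp => hder p hp)
  have hfd0 : fderiv ℝ (fun q : ℝ × Euc n × Euc n =>
      lam - ((1 / 2) * ‖N q‖ ^ 2 + V q.2.1)) (t, y, z) = 0 := by
    rw [← hEq.fderiv_eq]; exact hcontra
  -- differentiate the explicit function
  have hNcd : ContDiffAt ℝ (⊤ : ℕ∞) N (t, y, z) := hηsmooth.contDiffAt (hopen.mem_nhds hmemq)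
  have hN : HasFDerivAt N (fderiv ℝ N (t, y, z)) (t, y, z) :=
    (hNcd.differentiableAt (by simp)).hasFDerivAt
  set DN := fderiv ℝ N ((t, y, z) : ℝ × Euc n × Euc n) with hDNdef
  have hn2 := (hN.inner ℝ hN).const_mul ((1:ℝ)/2)
  simp only [real_inner_self_eq_norm_sq] at hn2
  have hproj : HasFDerivAt (fun q : ℝ × Euc n × Euc n => q.2.1)
      ((ContinuousLinearMap.fst ℝ (Euc n) (Euc n)).comp
        (ContinuousLinearMap.snd ℝ ℝ (Euc n × Euc n))) (t, y, z) :=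
    ((ContinuousLinearMap.fst ℝ (Euc n) (Euc n)).comp
      (ContinuousLinearMap.snd ℝ ℝ (Euc n × Euc n))).hasFDerivAt
  have hVp : HasFDerivAt (fun q : ℝ × Euc n × Euc n => V q.2.1)
      ((fderiv ℝ V y).comp ((ContinuousLinearMap.fst ℝ (Euc n) (Euc n)).comp
        (ContinuousLinearMap.snd ℝ ℝ (Euc n × Euc n)))) (t, y, z) :=
    (hV.differentiable (by simp) y).hasFDerivAt.comp _ hproj
  have hg := (hn2.add hVp).const_sub lam
  have hL0 : fderiv ℝ (fun q : ℝ × Euc n × Euc n => lam - ((1 / 2) * ‖N q‖ ^ 2 + V q.2.1)) (t, y, z) = _ := hg.fderiv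
  rw [hfd0] at hL0
  have key : ∀ w : ℝ × Euc n × Euc n, ⟪N (t, y, z), DN w⟫ + fderiv ℝ V y w.2.1 = 0 := by
    intro w
    have := congrArg (fun L : (ℝ × Euc n × Euc n) →L[ℝ] ℝ => L w) hL0
    simp only [ContinuousLinearMap.zero_apply, ContinuousLinearMap.coe_comp',
      Function.comp_apply, ContinuousLinearMap.coe_fst', ContinuousLinearMap.coe_snd',
      ContinuousLinearMap.neg_apply, ContinuousLinearMap.sub_apply,
      ContinuousLinearMap.add_apply, ContinuousLinearMap.smul_apply,
      fderivInnerCLM_apply, ContinuousLinearMap.prod_apply] at this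
    simp only [smul_eq_mul] at this
    rw [real_inner_comm (N (t, y, z)) (DN w)] at this
    linarith [this]
  -- the z-derivative of ηh is injective, hence surjective
  set J : Euc n →L[ℝ] ℝ × Euc n × Euc n :=
    ((0 : Euc n →L[ℝ] ℝ)).prod (((0 : Euc n →L[ℝ] Euc n)).prod
      (ContinuousLinearMap.id ℝ (Euc n))) with hJdef
  have hι : HasFDerivAt (fun z' : Euc n => ((t, y, z') : ℝ × Euc n × Euc n)) J z :=
    (hasFDerivAt_const t z).prodMk ((hasFDerivAt_const y z).prodMk (hasFDerivAt_id z))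
  have hζ : HasFDerivAt (fun z' : Euc n => N (t, y, z')) (DN.comp J) z := by
    have := hN.comp z hι; exact this
  have hXd : Differentiable ℝ (fun η' : Euc n => (Φ t (y, η')).1) := by
    have h1 : Differentiable ℝ (fun η' : Euc n => Φ t (y, η')) :=
      (hΦ.1.differentiable (by simp)).comp
        ((differentiable_const t).prodMk ((differentiable_const y).prodMk differentiable_id))
    exact h1.fst
  have hA : HasFDerivAt (fun η' : Euc n => (Φ t (y, η')).1)
      (fderiv ℝ (fun η' : Euc n => (Φ t (y, η')).1) (N (t, y, z))) (N (t, y, z)) :=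
    (hXd _).hasFDerivAt
  set A := fderiv ℝ (fun η' : Euc n => (Φ t (y, η')).1) (N (t, y, z)) with hAdef
  have hXcomp : HasFDerivAt (fun z' : Euc n => (Φ t (y, N (t, y, z'))).1)
      (A.comp (DN.comp J)) z := hA.comp z hζ
  have hXid : HasFDerivAt (fun z' : Euc n => (Φ t (y, N (t, y, z'))).1)
      (ContinuousLinearMap.id ℝ (Euc n)) z := by
    have hev : (fun z' : Euc n => (Φ t (y, N (t, y, z'))).1) =ᶠ[nhds z] (fun z' => z') :=
      Filter.eventually_of_mem (hZ.mem_nhds hz) (fun z' hz' => hsolve t ht y hy z' hz')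
    exact (hasFDerivAt_id z).congr_of_eventuallyEq hev
  have huniq : A.comp (DN.comp J) = ContinuousLinearMap.id ℝ (Euc n) := hXcomp.unique hXid
  have hinj : Function.Injective (DN.comp J) := by
    intro u u' huu
    have h1 : A ((DN.comp J) u) = A ((DN.comp J) u') := congrArg A huu
    rw [← ContinuousLinearMap.comp_apply, ← ContinuousLinearMap.comp_apply, huniq] at h1
    simpa using h1
  have hsurj : Function.Surjective fun u => (DN.comp J) u := by
    have := (LinearMap.injective_iff_surjective
      (f := ((DN.comp J : Euc n →L[ℝ] Euc n) : Euc n →ₗ[ℝ] Euc n))).mp hinj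
    exact this
  -- conclude that ηh t y z = 0
  have hNzero : N (t, y, z) = 0 := by
    obtain ⟨u, hu⟩ := hsurj (N (t, y, z))
    have hk := key (J u)
    have hDNJ : DN (J u) = N (t, y, z) := hu
    have hJu : ((J u).2.1 : Euc n) = 0 := by
      simp [hJdef]
    rw [hDNJ, hJu, map_zero, add_zero, real_inner_self_eq_norm_sq] at hk
    have h2 : ‖N (t, y, z)‖ = 0 :=
      pow_eq_zero_iff (by norm_num : 2 ≠ 0) |>.mp hk
    exact norm_eq_zero.mp h2
  -- conclude that the gradient of V vanishes at y
  have hfVy : fderiv ℝ V y = 0 := by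
    ext wy
    have hk := key ((0 : ℝ), wy, (0 : Euc n))
    rw [hNzero] at hk
    simp only [inner_zero_left, zero_add] at hk
    simpa using hk
  have hgrad0 : gradient V y = 0 := by
    rw [show gradient V y = (InnerProductSpace.toDual ℝ (Euc n)).symm (fderiv ℝ V y) from rfl,
      hfVy, map_zero]
  -- the energy level is lam, contradicting regularity
  have hg0 : lam - ((1 / 2) * ‖N (t, y, z)‖ ^ 2 + V y) = 0 := by
    rw [← hder (t, y, z) hmemq]; exact hderiv0
  rw [hNzero] at hg0
  have hHam : Ham n V (y, (0 : Euc n)) = lam := by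
    simp only [Ham]
    simp only [norm_zero] at hg0 ⊢
    linarith [hg0]
  exact hreg y 0 hHam ⟨hgrad0, rfl⟩
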